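/- (Pointwise Picone inequality) Let p ∈ (1,∞), N ≥ 1, let w ≥ 0 and φ > 0 be real numbers, and let a, b ∈ ℝ^N. Then ‖a‖^p + (p−1)(w/φ)^p ‖b‖^p − p(w/φ)^{p−1} ‖b‖^{p−2}⟨a,b⟩ ≥ 0, where the last term is interpreted as 0 when b = 0. Moreover, equality holds if and only if a = (w/φ)·b. -/
import Mathlib


open MeasureTheory Real Filter
open scoped RealInnerProductSpace

noncomputable section

/-- The exterior `B_ρ^c = {x ∈ ℝ^N : |x| > ρ}` of the closed ball of radius `ρ` in `ℝ^N`. -/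
def extBall (N : ℕ) (ρ : ℝ) : Set (EuclideanSpace ℝ (Fin N)) := {x | ρ < ‖x‖}

/-- A nonnegative smooth test function compactly supported in `G`. -/
def IsTestFun {N : ℕ} (G : Set (EuclideanSpace ℝ (Fin N)))
    (φ : EuclideanSpace ℝ (Fin N) → ℝ) : Prop :=
  ContDiff ℝ (⊤ : ℕ∞) φ ∧ HasCompactSupport φ ∧ tsupport φ ⊆ G ∧ ∀ x, 0 ≤ φ x

/-- The critical Hardy constant `C_H = |(N-p)/p|^p`. -/
def CHardy (N : ℕ) (p : ℝ) : ℝ := |((N : ℝ) - p) / p| ^ p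

/-- `γ_* = (p-N)/p`. -/
def gammaStar (N : ℕ) (p : ℝ) : ℝ := (p - (N : ℝ)) / p

/-- `m_* = 2` if `p ≠ N`, `m_* = N` if `p = N`. -/
def mStar (N : ℕ) (p : ℝ) : ℝ := if p = (N : ℝ) then (N : ℝ) else 2

/-- `C_* = (p-1)/(2p)·|(N-p)/p|^{p-2}` if `p ≠ N`, `C_* = ((N-1)/N)^N` if `p = N`. -/
def CStar (N : ℕ) (p : ℝ) : ℝ :=
  if p = (N : ℝ) then (((N : ℝ) - 1) / (N : ℝ)) ^ (N : ℝ)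
  else ((p - 1) / (2 * p)) * |((N : ℝ) - p) / p| ^ (p - 2)

/-- The function `γ ↦ -γ|γ|^{p-2}(γ(p-1)+N-p)` whose level sets define `γ₋ ≤ γ₊`. -/
def gFun (N : ℕ) (p γ : ℝ) : ℝ := -γ * |γ| ^ (p - 2) * (γ * (p - 1) + (N : ℝ) - p)

/-- `γm ≤ γp` are the real roots of `-γ|γ|^{p-2}(γ(p-1)+N-p) = μ`. -/
def AreRoots (N : ℕ) (p μ γm γp : ℝ) : Prop :=
  γm ≤ γp ∧ gFun N p γm = μ ∧ gFun N p γp = μ ∧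
    ∀ γ : ℝ, gFun N p γ = μ → γ = γm ∨ γ = γp

/-- The left-hand side of the equation defining `β₋ ≤ β₊`:
`(1/2)|γ_*|^{p-2}(p-1)(2-βp)β` if `p ≠ N`, and `(N-1)(1-β)β^{N-1}` if `p = N`. -/
def betaFun (N : ℕ) (p β : ℝ) : ℝ :=
  if p = (N : ℝ) then ((N : ℝ) - 1) * (1 - β) * β ^ ((N : ℝ) - 1)
  else (1 / 2) * |gammaStar N p| ^ (p - 2) * (p - 1) * (2 - β * p) * β

/-- `βm ≤ βp` are the real roots of the equation `betaFun N p β = ε`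
(lying, as in the paper, in `[0, 2/p]` if `p ≠ N` and in `[0, 1]` if `p = N`). -/
def AreBetaRoots (N : ℕ) (p ε βm βp : ℝ) : Prop :=
  βm ≤ βp ∧ betaFun N p βm = ε ∧ betaFun N p βp = ε ∧
  0 ≤ βm ∧ βp ≤ (if p = (N : ℝ) then 1 else 2 / p) ∧
  ∀ β : ℝ, 0 ≤ β → β ≤ (if p = (N : ℝ) then 1 else 2 / p) → betaFun N p β = ε →
    β = βm ∨ β = βp

/-- `u` is a positive C¹ supersolution of `-Δ_p u - μ|x|^{-p}u^{p-1} = C|x|^{-σ}u^q` in `G`. -/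
def IsSupersolMain (N : ℕ) (p μ C σ q : ℝ) (G : Set (EuclideanSpace ℝ (Fin N)))
    (u : EuclideanSpace ℝ (Fin N) → ℝ) : Prop :=
  ContDiffOn ℝ 1 u G ∧ (∀ x ∈ G, 0 < u x) ∧
  ∀ φ : EuclideanSpace ℝ (Fin N) → ℝ, IsTestFun G φ →
    (∫ x in G, ‖gradient u x‖ ^ (p - 2) * ⟪gradient u x, gradient φ x⟫)
      - μ * ∫ x in G, ‖x‖ ^ (-p) * u x ^ (p - 1) * φ x
    ≥ C * ∫ x in G, ‖x‖ ^ (-σ) * u x ^ q * φ x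

/-- `u` is a positive C¹ solution of `-Δ_p u - μ|x|^{-p}u^{p-1} = C|x|^{-σ}u^q` in `G`. -/
def IsSolMain (N : ℕ) (p μ C σ q : ℝ) (G : Set (EuclideanSpace ℝ (Fin N)))
    (u : EuclideanSpace ℝ (Fin N) → ℝ) : Prop :=
  ContDiffOn ℝ 1 u G ∧ (∀ x ∈ G, 0 < u x) ∧
  ∀ φ : EuclideanSpace ℝ (Fin N) → ℝ, IsTestFun G φ →
    (∫ x in G, ‖gradient u x‖ ^ (p - 2) * ⟪gradient u x, gradient φ x⟫)
      - μ * ∫ x in G, ‖x‖ ^ (-p) * u x ^ (p - 1) * φ x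
    = C * ∫ x in G, ‖x‖ ^ (-σ) * u x ^ q * φ x

/-- `u` is a positive C¹ supersolution of
`-Δ_p u - μ|x|^{-p}u^{p-1} - ε|x|^{-p}(log|x|)^{-m_*}u^{p-1} = 0` in `G`. -/
def IsSupersolHardy (N : ℕ) (p μ ε : ℝ) (G : Set (EuclideanSpace ℝ (Fin N)))
    (u : EuclideanSpace ℝ (Fin N) → ℝ) : Prop :=
  ContDiffOn ℝ 1 u G ∧ (∀ x ∈ G, 0 < u x) ∧
  ∀ φ : EuclideanSpace ℝ (Fin N) → ℝ, IsTestFun G φ →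
    (∫ x in G, ‖gradient u x‖ ^ (p - 2) * ⟪gradient u x, gradient φ x⟫)
      - ∫ x in G, (μ * ‖x‖ ^ (-p) + ε * ‖x‖ ^ (-p) * Real.log ‖x‖ ^ (-(mStar N p)))
          * u x ^ (p - 1) * φ x
    ≥ 0

lemma young_aux (p : ℝ) (hp : 1 < p) (r s : ℝ) (hr : 0 ≤ r) (hs : 0 < s) :
    p * s ^ (p - 1) * r ≤ r ^ p + (p - 1) * s ^ p ∧
      (p * s ^ (p - 1) * r = r ^ p + (p - 1) * s ^ p ↔ r = s) := by
  have hb : (-1:ℝ) ≤ r / s - 1 := by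
    have : 0 ≤ r / s := div_nonneg hr hs.le
    linarith
  have hdiv : (r / s) ^ p = r ^ p / s ^ p := Real.div_rpow hr hs.le p
  have hsp : 0 < s ^ p := Real.rpow_pos_of_pos hs p
  have hsp1 : s ^ (p - 1) = s ^ p / s := Real.rpow_sub_one hs.ne' p
  have hber : 1 + p * (r / s - 1) ≤ (r / s) ^ p := by
    have := one_add_mul_self_le_rpow_one_add hb hp.le
    simpa using this
  have hineq : p * s ^ (p - 1) * r ≤ r ^ p + (p - 1) * s ^ p := by
    have h2 : (1 + p * (r / s - 1)) * s ^ p ≤ r ^ p := by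
      calc (1 + p * (r / s - 1)) * s ^ p ≤ (r / s) ^ p * s ^ p :=
            mul_le_mul_of_nonneg_right hber hsp.le
        _ = r ^ p := by rw [hdiv]; field_simp
    have h3 : (1 + p * (r / s - 1)) * s ^ p
        = s ^ p + p * s ^ (p - 1) * r - p * s ^ p := by
      rw [hsp1]; field_simp; ring
    linarith
  refine ⟨hineq, ⟨fun heq => ?_, fun heq => ?_⟩⟩
  · by_contra hne
    have hs' : r / s - 1 ≠ 0 := by
      intro h
      apply hne
      have : r / s = 1 := by linarith
      field_simp at this
      linarith
    have hber' : 1 + p * (r / s - 1) < (r / s) ^ p := by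
      have := one_add_mul_self_lt_rpow_one_add hb hs' hp
      simpa using this
    have h2 : (1 + p * (r / s - 1)) * s ^ p < r ^ p := by
      calc (1 + p * (r / s - 1)) * s ^ p < (r / s) ^ p * s ^ p :=
            mul_lt_mul_of_pos_right hber' hsp
        _ = r ^ p := by rw [hdiv]; field_simp
    have h3 : (1 + p * (r / s - 1)) * s ^ p
        = s ^ p + p * s ^ (p - 1) * r - p * s ^ p := by
      rw [hsp1]; field_simp; ring
    linarith
  · subst heq
    rw [hsp1]; field_simp; ring

/-- pointwise Picone inequality, with equality iff `a = (w/φ)·b`. -/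
theorem stmt10 (N : ℕ) (hN : 1 ≤ N) (p : ℝ) (hp1 : 1 < p)
    (w φ : ℝ) (hw : 0 ≤ w) (hφ : 0 < φ)
    (a b : EuclideanSpace ℝ (Fin N)) :
    0 ≤ ‖a‖ ^ p + (p - 1) * (w / φ) ^ p * ‖b‖ ^ p
        - p * (w / φ) ^ (p - 1) * ‖b‖ ^ (p - 2) * ⟪a, b⟫ ∧
    (‖a‖ ^ p + (p - 1) * (w / φ) ^ p * ‖b‖ ^ p
        - p * (w / φ) ^ (p - 1) * ‖b‖ ^ (p - 2) * ⟪a, b⟫ = 0 ↔ a = (w / φ) • b) := by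
  set t := w / φ with ht_def
  have ht : 0 ≤ t := div_nonneg hw hφ.le
  have hp0 : p ≠ 0 := by linarith
  have hp1' : p - 1 ≠ 0 := by intro h; linarith [h]
  have hrz : ∀ c : EuclideanSpace ℝ (Fin N), ‖c‖ ^ p = 0 ↔ c = 0 := by
    intro c
    rw [Real.rpow_eq_zero (norm_nonneg c) hp0, norm_eq_zero]
  by_cases hb : b = 0
  · subst hb
    simp only [norm_zero, inner_zero_right, mul_zero, smul_zero,
      Real.zero_rpow hp0, sub_zero, add_zero]
    exact ⟨Real.rpow_nonneg (norm_nonneg a) p, hrz a⟩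
  by_cases ht0 : t = 0
  · rw [ht0]
    simp only [Real.zero_rpow hp0, Real.zero_rpow hp1', zero_smul, mul_zero, zero_mul,
      sub_zero, add_zero]
    exact ⟨Real.rpow_nonneg (norm_nonneg a) p, hrz a⟩
  have htp : 0 < t := lt_of_le_of_ne ht (Ne.symm ht0)
  have hbn : 0 < ‖b‖ := norm_pos_iff.mpr hb
  set s := t * ‖b‖ with hs_def
  have hs : 0 < s := mul_pos htp hbn
  obtain ⟨hy, hyiff⟩ := young_aux p hp1 ‖a‖ s (norm_nonneg a) hs
  -- relate s powers
  have hsp : s ^ p = t ^ p * ‖b‖ ^ p := Real.mul_rpow ht hbn.le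
  have hsp1 : s ^ (p - 1) = t ^ (p - 1) * ‖b‖ ^ (p - 1) := Real.mul_rpow ht hbn.le
  have hbp1 : ‖b‖ ^ (p - 1) = ‖b‖ ^ (p - 2) * ‖b‖ := by
    have h := Real.rpow_add hbn (p - 2) 1
    rw [Real.rpow_one, show p - 2 + 1 = p - 1 by ring] at h
    exact h
  have hc : 0 < p * t ^ (p - 1) * ‖b‖ ^ (p - 2) := by
    have := Real.rpow_pos_of_pos htp (p - 1)
    have := Real.rpow_pos_of_pos hbn (p - 2)
    positivity
  have hCS : ⟪a, b⟫ ≤ ‖a‖ * ‖b‖ := real_inner_le_norm a b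
  have key : p * t ^ (p - 1) * ‖b‖ ^ (p - 2) * ⟪a, b⟫
      ≤ p * s ^ (p - 1) * ‖a‖ := by
    have h1 : p * t ^ (p - 1) * ‖b‖ ^ (p - 2) * ⟪a, b⟫
        ≤ p * t ^ (p - 1) * ‖b‖ ^ (p - 2) * (‖a‖ * ‖b‖) :=
      mul_le_mul_of_nonneg_left hCS hc.le
    have h2 : p * t ^ (p - 1) * ‖b‖ ^ (p - 2) * (‖a‖ * ‖b‖)
        = p * s ^ (p - 1) * ‖a‖ := by
      rw [hsp1, hbp1]; ring
    linarith
  have main_ineq : 0 ≤ ‖a‖ ^ p + (p - 1) * t ^ p * ‖b‖ ^ p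
      - p * t ^ (p - 1) * ‖b‖ ^ (p - 2) * ⟪a, b⟫ := by
    rw [show (p - 1) * t ^ p * ‖b‖ ^ p = (p - 1) * s ^ p by rw [hsp]; ring]
    linarith
  refine ⟨main_ineq, ⟨fun heq => ?_, fun ha => ?_⟩⟩
  · -- equality forces both inequalities to be equalities
    have heq' : ‖a‖ ^ p + (p - 1) * s ^ p
        = p * t ^ (p - 1) * ‖b‖ ^ (p - 2) * ⟪a, b⟫ := by
      have : (p - 1) * t ^ p * ‖b‖ ^ p = (p - 1) * s ^ p := by rw [hsp]; ring
      linarith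
    have hy_eq : p * s ^ (p - 1) * ‖a‖ = ‖a‖ ^ p + (p - 1) * s ^ p :=
      le_antisymm hy (by linarith)
    have hnorm : ‖a‖ = s := hyiff.mp hy_eq
    have hCS_eq : ⟪a, b⟫ = ‖a‖ * ‖b‖ := by
      have h2 : p * t ^ (p - 1) * ‖b‖ ^ (p - 2) * (‖a‖ * ‖b‖)
          = p * s ^ (p - 1) * ‖a‖ := by
        rw [hsp1, hbp1]; ring
      have : p * t ^ (p - 1) * ‖b‖ ^ (p - 2) * ⟪a, b⟫
          = p * t ^ (p - 1) * ‖b‖ ^ (p - 2) * (‖a‖ * ‖b‖) := by linarith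
      exact mul_left_cancel₀ hc.ne' this
    have hsm : ‖b‖ • a = ‖a‖ • b := inner_eq_norm_mul_iff_real.mp hCS_eq
    have : ‖b‖ • a = ‖b‖ • (t • b) := by
      rw [hsm, hnorm, hs_def, smul_smul, mul_comm]
    exact smul_right_injective _ hbn.ne' this
  · -- a = t • b : direct computation
    have e1 : ‖a‖ = t * ‖b‖ := by
      rw [ha, norm_smul, Real.norm_eq_abs, abs_of_nonneg ht]
    have e2 : ‖a‖ ^ p = t ^ p * ‖b‖ ^ p := by
      rw [e1, Real.mul_rpow ht hbn.le]
    have e3 : ⟪a, b⟫ = t * (‖b‖ * ‖b‖) := by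
      rw [ha, real_inner_smul_left, real_inner_self_eq_norm_mul_norm]
    have e4 : ‖b‖ ^ (p - 2) * (‖b‖ * ‖b‖) = ‖b‖ ^ p := by
      have hb2 : ‖b‖ ^ (2:ℝ) = ‖b‖ * ‖b‖ := by
        rw [show (2:ℝ) = ((2:ℕ):ℝ) by norm_num, Real.rpow_natCast]
        ring
      have h := Real.rpow_add hbn (p - 2) 2
      rw [hb2, show p - 2 + 2 = p by ring] at h
      exact h.symm
    have e5 : t ^ (p - 1) * t = t ^ p := by
      have h := Real.rpow_add htp (p - 1) 1
      rw [Real.rpow_one, show p - 1 + 1 = p by ring] at h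
      exact h.symm
    have e6 : p * t ^ (p - 1) * ‖b‖ ^ (p - 2) * ⟪a, b⟫ = p * (t ^ p * ‖b‖ ^ p) := by
      rw [e3, ← e5, ← e4]; ring
    rw [e2, e6]; ring
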